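/- Fix α = p/q ∈ ℚ with q > 0 and gcd(p,q) = 1, fix c > 0, and set ε = ε_R := c/R. Then, as R → ∞, S_α(ε,R) = γ·R + O(1), where γ := c q²/(p²+q²) + (1/(c q²))·{c q²/√(p²+q²)}·(1 − {c q²/√(p²+q²)}) is a constant, {x} denotes the fractional part of x, and the implied constant depends only on p, q and c. In particular, if c < √(p²+q²)/q², then γ = 1/√(p²+q²). -/

import Mathlib

set_option maxHeartbeats 1600000

open Filter Real

/-- `latticeS α ε R` is the number of integer lattice points `(m, n)` with `m ≥ 1`,
`m² + n² ≤ R²` and `|n - αm| < mε`, i.e. the number of lattice points in the sector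
`Sect_{α,ε}(R)`. -/
noncomputable def latticeS (α ε R : ℝ) : ℕ :=
  Set.ncard {x : ℤ × ℤ | 1 ≤ x.1 ∧ (x.1 : ℝ) ^ 2 + (x.2 : ℝ) ^ 2 ≤ R ^ 2 ∧
    |(x.2 : ℝ) - α * x.1| < x.1 * ε}

/-- The area of the sector `Sect_{α,ε}(R)`. -/
noncomputable def sectArea (α ε R : ℝ) : ℝ :=
  R ^ 2 / 2 * (Real.arctan (α + ε) - Real.arctan (α - ε))


lemma Icc_succ (n : ℤ) (hn : 0 ≤ n) :
    Finset.Icc (-(n+1)) (n+1) = insert (-(n+1)) (insert (n+1) (Finset.Icc (-n) n)) := by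
  ext k
  simp only [Finset.mem_Icc, Finset.mem_insert]
  omega

lemma sum_abs_Icc (n : ℕ) : ∑ k ∈ Finset.Icc (-(n:ℤ)) (n:ℤ), |k| = (n:ℤ) * (n+1) := by
  induction n with
  | zero => simp
  | succ m ih =>
    have hc : ((m+1 : ℕ) : ℤ) = (m:ℤ) + 1 := by push_cast; ring
    rw [hc, Icc_succ (m:ℤ) (by positivity), Finset.sum_insert, Finset.sum_insert, ih]
    · have h1 : |(-((m:ℤ)+1))| = (m:ℤ)+1 := by rw [abs_neg]; exact abs_of_nonneg (by positivity)
      have h2 : |((m:ℤ)+1)| = (m:ℤ)+1 := abs_of_nonneg (by positivity)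
      rw [h1, h2]; ring
    · simp only [Finset.mem_Icc]; omega
    · simp only [Finset.mem_insert, Finset.mem_Icc]; omega


lemma int_abs_cast (k : ℤ) : |(k:ℝ)| = ((|k| : ℤ) : ℝ) := by push_cast; ring


lemma max_sum_identity (x : ℝ) (hx : 0 < x) (K : ℤ) (hK : x ≤ K) :
    ∑ k ∈ Finset.Icc (-K) K, max 0 (x - |(k:ℝ)|) = x^2 + Int.fract x * (1 - Int.fract x) := by
  set J : ℤ := ⌊x⌋ with hJdef
  have hJ0 : 0 ≤ J := Int.floor_nonneg.mpr hx.le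
  have hJK : J ≤ K := by
    have h1 : (J:ℝ) ≤ x := Int.floor_le x
    have : (J:ℝ) ≤ (K:ℝ) := h1.trans hK
    exact_mod_cast this
  have hfr : (J:ℝ) + Int.fract x = x := Int.floor_add_fract x
  have hf0 : 0 ≤ Int.fract x := Int.fract_nonneg x
  have hf1 : Int.fract x < 1 := Int.fract_lt_one x
  have hsub : Finset.Icc (-J) J ⊆ Finset.Icc (-K) K := by
    apply Finset.Icc_subset_Icc <;> omega
  rw [← Finset.sum_subset hsub ?zero]
  case zero =>
    intro k hk hk'
    simp only [Finset.mem_Icc] at hk hk'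
    have habs : J + 1 ≤ |k| := by
      rcases le_or_gt 0 k with h|h
      · rw [abs_of_nonneg h]; omega
      · rw [abs_of_neg h]; omega
    have h2 : (J:ℝ) + 1 ≤ |(k:ℝ)| := by
      rw [int_abs_cast]
      have : ((J + 1 : ℤ):ℝ) ≤ ((|k| : ℤ):ℝ) := by exact_mod_cast habs
      push_cast at this ⊢; linarith
    have hneg : x - |(k:ℝ)| ≤ 0 := by
      have : x < J + 1 := Int.lt_floor_add_one x
      linarith
    exact max_eq_left hneg
  have hpos : ∀ k ∈ Finset.Icc (-J) J, max 0 (x - |(k:ℝ)|) = x - |(k:ℝ)| := by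
    intro k hk
    simp only [Finset.mem_Icc] at hk
    have habs : |k| ≤ J := by
      rcases le_or_gt 0 k with h|h
      · rw [abs_of_nonneg h]; omega
      · rw [abs_of_neg h]; omega
    have h1 : |(k:ℝ)| ≤ J := by
      rw [int_abs_cast]; exact_mod_cast habs
    have h2 : (J:ℝ) ≤ x := Int.floor_le x
    apply max_eq_right; linarith
  rw [Finset.sum_congr rfl hpos, Finset.sum_sub_distrib]
  have hcard : (Finset.Icc (-J) J).card = (2*J+1).toNat := by
    rw [Int.card_Icc]; congr 1; omega
  have habs : ∑ k ∈ Finset.Icc (-J) J, |(k:ℝ)| = (J:ℝ) * (J+1) := by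
    have hN : J = ((J.toNat : ℕ) : ℤ) := (Int.toNat_of_nonneg hJ0).symm
    have h1 : ∑ k ∈ Finset.Icc (-J) J, |(k:ℝ)| = ((∑ k ∈ Finset.Icc (-J) J, |k| : ℤ) : ℝ) := by
      push_cast; rfl
    rw [h1, hN, sum_abs_Icc]; push_cast; ring
  rw [Finset.sum_congr rfl (fun k _ => rfl), Finset.sum_const, habs, hcard, nsmul_eq_mul]
  have hc : ((2*J+1).toNat : ℝ) = 2*(J:ℝ)+1 := by
    have : ((2*J+1).toNat : ℤ) = 2*J+1 := Int.toNat_of_nonneg (by omega)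
    exact_mod_cast this
  rw [hc]
  linear_combination (x - ((J:ℝ) + 1 - Int.fract x)) * hfr


noncomputable def aF (q a₀ : ℤ) (c R : ℝ) (k : ℤ) : ℝ :=
  (|(k:ℝ)| * R / ((q:ℝ)*c) + (a₀:ℝ)*(k:ℝ)) / (q:ℝ)

noncomputable def bF (p q a₀ : ℤ) (R : ℝ) (k : ℤ) : ℝ :=
  (((q:ℝ) * Real.sqrt (((p:ℝ)^2+(q:ℝ)^2)*R^2 - (k:ℝ)^2) - (p:ℝ)*(k:ℝ)) / ((p:ℝ)^2+(q:ℝ)^2)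
    + (a₀:ℝ)*(k:ℝ)) / (q:ℝ)


lemma latticeS_eq (p q a₀ b₀ K : ℤ) (hq : 0 < q) (hab : a₀ * p + b₀ * q = 1)
    (c R : ℝ) (hc : 0 < c) (hK : (q:ℝ) * c ≤ (K:ℝ)) (hR : (K:ℝ) + |(p:ℝ)| * (K:ℝ) + 1 ≤ R) :
    latticeS ((p:ℝ)/(q:ℝ)) (c/R) R = ∑ k ∈ Finset.Icc (-K) K,
      (⌊bF p q a₀ R k⌋ - ⌊aF q a₀ c R k⌋).toNat := by
  have hq0 : (q:ℤ) ≠ 0 := by omega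
  have hq' : (0:ℝ) < q := by exact_mod_cast hq
  have hq1 : (1:ℝ) ≤ q := by exact_mod_cast hq
  have hK0 : (0:ℝ) < K := lt_of_lt_of_le (by positivity) hK
  have hK1 : (1:ℝ) ≤ K := by
    have : (0:ℤ) < K := by exact_mod_cast hK0
    exact_mod_cast this
  have hpabs : (0:ℝ) ≤ |(p:ℝ)| * K := by positivity
  have hR0 : (0:ℝ) < R := by linarith
  have habr : (a₀:ℝ)*(p:ℝ) + (b₀:ℝ)*(q:ℝ) = 1 := by exact_mod_cast hab
  set D : ℝ := (p:ℝ)^2+(q:ℝ)^2 with hD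
  have hD1 : (1:ℝ) ≤ D := by nlinarith
  have hD0 : (0:ℝ) < D := by linarith
  have hDRk : ∀ k : ℤ, -K ≤ k → k ≤ K → (0:ℝ) ≤ D*R^2 - (k:ℝ)^2 ∧
      |(p:ℝ)| * (K:ℝ) ≤ Real.sqrt (D*R^2 - (k:ℝ)^2) := by
    intro k hk1 hk2
    have hkK : |(k:ℝ)| ≤ (K:ℝ) := by
      have u1 : (-(K:ℝ)) ≤ (k:ℝ) := by exact_mod_cast hk1
      have u2 : (k:ℝ) ≤ (K:ℝ) := by exact_mod_cast hk2
      rw [abs_le]; exact ⟨u1, u2⟩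
    have hk2' : (k:ℝ)^2 ≤ (K:ℝ)^2 := by
      nlinarith [sq_abs (k:ℝ), abs_nonneg (k:ℝ)]
    have h1 : (0:ℝ) ≤ D*R^2 - (k:ℝ)^2 := by nlinarith
    refine ⟨h1, ?_⟩
    have h2 : (|(p:ℝ)| * (K:ℝ))^2 ≤ D*R^2 - (k:ℝ)^2 := by
      have hRK1 : R - K ≥ |(p:ℝ)| * K + 1 := by linarith
      have hRK2 : R + K ≥ |(p:ℝ)| * K + 1 := by linarith
      nlinarith [sq_abs (p:ℝ)]
    calc |(p:ℝ)| * (K:ℝ) = Real.sqrt ((|(p:ℝ)| * (K:ℝ))^2) := (Real.sqrt_sq (by positivity)).symm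
      _ ≤ Real.sqrt (D*R^2 - (k:ℝ)^2) := Real.sqrt_le_sqrt h2
  set F : Finset (ℤ × ℤ) := (Finset.Icc (-K) K).biUnion
      (fun k => (Finset.Ioc ⌊aF q a₀ c R k⌋ ⌊bF p q a₀ R k⌋).image
        (fun t => (q*t - a₀*k, p*t + b₀*k))) with hF
  have hset : {x : ℤ × ℤ | 1 ≤ x.1 ∧ (x.1 : ℝ) ^ 2 + (x.2 : ℝ) ^ 2 ≤ R ^ 2 ∧
      |(x.2 : ℝ) - (p:ℝ)/(q:ℝ) * x.1| < x.1 * (c/R)} = ↑F := by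
    ext ⟨m, n⟩
    simp only [Set.mem_setOf_eq, hF, Finset.coe_biUnion, Set.mem_iUnion, Finset.mem_coe,
      Finset.mem_image, Finset.mem_Ioc, Finset.mem_Icc]
    constructor
    · rintro ⟨h1, h2, h3⟩
      have hm0 : (0:ℝ) < m := by exact_mod_cast lt_of_lt_of_le zero_lt_one h1
      obtain ⟨k, hk⟩ : ∃ k : ℤ, k = q*n - p*m := ⟨_, rfl⟩
      have hkr : (k:ℝ) = q*n - p*m := by rw [hk]; push_cast; ring
      have habs3 : |(n:ℝ) - (p:ℝ)/(q:ℝ) * m| = |(k:ℝ)|/q := by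
        have heq : (n:ℝ) - (p:ℝ)/(q:ℝ)*m = (k:ℝ)/q := by
          rw [hkr]; field_simp
        rw [heq, abs_div, abs_of_pos hq']
      have hmR : (m:ℝ) ≤ R := by nlinarith
      have hkey : |(k:ℝ)| * R < (m:ℝ) * (q:ℝ) * c := by
        rw [habs3, div_lt_iff₀ hq'] at h3
        have h4 : (m:ℝ) * (c/R) * q = (m:ℝ) * q * c / R := by ring
        rw [h4, lt_div_iff₀ hR0] at h3
        linarith
      have hkK : |(k:ℝ)| < (q:ℝ)*c := by
        have h6 : |(k:ℝ)| * R < ((q:ℝ)*c) * R := by nlinarith [mul_pos hq' hc]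
        exact lt_of_mul_lt_mul_right h6 hR0.le
      have hkmem : -K ≤ k ∧ k ≤ K := by
        have h5 : |(k:ℝ)| ≤ (K:ℝ) := le_trans hkK.le hK
        rw [int_abs_cast] at h5
        have h' : |k| ≤ K := by exact_mod_cast h5
        constructor
        · have := neg_abs_le k; omega
        · have := le_abs_self k; omega
      have hpd_eq : p*(m + a₀*k) = q*(n - b₀*k) := by
        rw [hk]; linear_combination (q*n - p*m) * hab
      have hdvd : q ∣ m + a₀*k := by
        have hcop : IsCoprime (q:ℤ) p := ⟨b₀, a₀, by linarith [hab]⟩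
        exact hcop.dvd_of_dvd_mul_left ⟨n - b₀*k, hpd_eq.symm ▸ by ring⟩
      obtain ⟨t, ht⟩ := hdvd
      have hm_eq : m = q*t - a₀*k := by omega
      have hn_eq : n = p*t + b₀*k := by
        have h7 : q*(p*t) = q*(n - b₀*k) := by rw [← hpd_eq, ht]; ring
        have h8 := mul_left_cancel₀ hq0 h7
        linarith
      -- s and bounds
      set s : ℝ := Real.sqrt (D*R^2 - (k:ℝ)^2) with hs
      obtain ⟨hs1, hs_lb⟩ := hDRk k hkmem.1 hkmem.2
      have hs0 : 0 ≤ s := Real.sqrt_nonneg _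
      have hs2 : s^2 = D*R^2 - (k:ℝ)^2 := Real.sq_sqrt hs1
      -- identity
      have hiden : (D*(m:ℝ) + p*k)^2 - (q:ℝ)^2*(D*R^2 - (k:ℝ)^2)
          = D*(q:ℝ)^2*((m:ℝ)^2+(n:ℝ)^2-R^2) := by
        rw [hD]; linear_combination (((p:ℝ)^2+(q:ℝ)^2) * ((p:ℝ)*m + k + q*n)) * hkr
      have h8 : (D*(m:ℝ)+p*k)^2 ≤ ((q:ℝ)*s)^2 := by
        have e1 : ((q:ℝ)*s)^2 = (q:ℝ)^2*(D*R^2 - (k:ℝ)^2) := by rw [mul_pow, hs2]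
        rw [e1]
        have e2 : (0:ℝ) ≤ D*(q:ℝ)^2*(R^2 - ((m:ℝ)^2+(n:ℝ)^2)) :=
          mul_nonneg (mul_pos hD0 (pow_pos hq' 2)).le (by linarith)
        nlinarith [hiden, e2]
      have h9 : D*(m:ℝ) + p*k ≤ (q:ℝ)*s := by
        calc D*(m:ℝ)+p*k ≤ |D*(m:ℝ)+p*k| := le_abs_self _
          _ = Real.sqrt ((D*(m:ℝ)+p*k)^2) := (Real.sqrt_sq_eq_abs _).symm
          _ ≤ Real.sqrt (((q:ℝ)*s)^2) := Real.sqrt_le_sqrt h8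
          _ = |(q:ℝ)*s| := Real.sqrt_sq_eq_abs _
          _ = (q:ℝ)*s := abs_of_nonneg (by positivity)
      refine ⟨k, hkmem, t, ⟨?_, ?_⟩, ?_⟩
      · rw [Int.floor_lt]
        rw [aF, div_lt_iff₀ hq']
        have hAm : |(k:ℝ)| * R / ((q:ℝ)*c) < (m:ℝ) := by
          rw [div_lt_iff₀ (by positivity)]; linarith [hkey]
        have hmt : (m:ℝ) = q*t - a₀*k := by exact_mod_cast congrArg (Int.cast : ℤ → ℝ) hm_eq
        nlinarith [hAm, hmt]
      · rw [Int.le_floor]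
        rw [bF, le_div_iff₀ hq']
        have hmB : (m:ℝ) ≤ ((q:ℝ)*s - p*k)/D := by
          rw [le_div_iff₀ hD0]; linarith
        have hmt : (m:ℝ) = q*t - a₀*k := by exact_mod_cast congrArg (Int.cast : ℤ → ℝ) hm_eq
        have : ((q:ℝ)*Real.sqrt (((p:ℝ)^2+(q:ℝ)^2)*R^2 - (k:ℝ)^2) - (p:ℝ)*k)/((p:ℝ)^2+(q:ℝ)^2)
            = ((q:ℝ)*s - p*k)/D := by rw [hs, hD]
        rw [this]
        nlinarith [hmB, hmt]
      · rw [hm_eq, hn_eq]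
    · rintro ⟨k, ⟨hk1, hk2⟩, t, ⟨ht1, ht2⟩, heq⟩
      simp only [Prod.mk.injEq] at heq
      obtain ⟨hm_eq, hn_eq⟩ := heq
      have hmt : (m:ℝ) = q*t - a₀*k := by exact_mod_cast congrArg (Int.cast : ℤ → ℝ) hm_eq.symm
      have hnt : (n:ℝ) = p*t + b₀*k := by exact_mod_cast congrArg (Int.cast : ℤ → ℝ) hn_eq.symm
      have hkr : (q:ℝ)*n - p*m = k := by
        rw [hmt, hnt]; linear_combination (k:ℝ) * habr
      set s : ℝ := Real.sqrt (D*R^2 - (k:ℝ)^2) with hs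
      obtain ⟨hs1, hs_lb⟩ := hDRk k hk1 hk2
      have hs0 : 0 ≤ s := Real.sqrt_nonneg _
      have hs2 : s^2 = D*R^2 - (k:ℝ)^2 := Real.sq_sqrt hs1
      have hkK : |(k:ℝ)| ≤ (K:ℝ) := by
        have u1 : (-(K:ℝ)) ≤ (k:ℝ) := by exact_mod_cast hk1
        have u2 : (k:ℝ) ≤ (K:ℝ) := by exact_mod_cast hk2
        rw [abs_le]; exact ⟨u1, u2⟩
      -- from ht1 : floor aF < t
      have ha : aF q a₀ c R k < t := Int.floor_lt.mp ht1
      have hAm : |(k:ℝ)| * R / ((q:ℝ)*c) < (m:ℝ) := by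
        rw [aF, div_lt_iff₀ hq'] at ha
        nlinarith [ha, hmt]
      have hm0 : (0:ℝ) < m := lt_of_le_of_lt (by positivity) hAm
      have h1 : 1 ≤ m := by
        have : (0:ℤ) < m := by exact_mod_cast hm0
        omega
      -- from ht2
      have hb : (t:ℝ) ≤ bF p q a₀ R k := Int.le_floor.mp ht2
      have hmB : (m:ℝ) ≤ ((q:ℝ)*s - p*k)/D := by
        rw [bF, le_div_iff₀ hq'] at hb
        have hrw : ((q:ℝ)*Real.sqrt (((p:ℝ)^2+(q:ℝ)^2)*R^2 - (k:ℝ)^2) - (p:ℝ)*k)/((p:ℝ)^2+(q:ℝ)^2)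
            = ((q:ℝ)*s - p*k)/D := by rw [hs, hD]
        rw [hrw] at hb
        nlinarith [hb, hmt]
      have h9 : D*(m:ℝ) + p*k ≤ (q:ℝ)*s := by
        rw [le_div_iff₀ hD0] at hmB; linarith
      have h10 : -((q:ℝ)*s) ≤ D*(m:ℝ) + p*k := by
        have hpk : -(|(p:ℝ)| * K) ≤ (p:ℝ)*k := by
          have : |(p:ℝ)*k| ≤ |(p:ℝ)| * K := by
            rw [abs_mul]
            exact mul_le_mul_of_nonneg_left hkK (abs_nonneg _)
          linarith [neg_abs_le ((p:ℝ)*k)]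
        have hm1 : (1:ℝ) ≤ m := by exact_mod_cast h1
        nlinarith
      have hiden : (D*(m:ℝ) + p*k)^2 - (q:ℝ)^2*(D*R^2 - (k:ℝ)^2)
          = D*(q:ℝ)^2*((m:ℝ)^2+(n:ℝ)^2-R^2) := by
        rw [hD]; linear_combination (((p:ℝ)^2+(q:ℝ)^2) * ((p:ℝ)*m + k + q*n)) * hkr.symm
      have h2 : (m:ℝ)^2 + (n:ℝ)^2 ≤ R^2 := by
        have hsq : (D*(m:ℝ)+p*k)^2 ≤ ((q:ℝ)*s)^2 := sq_le_sq' h10 h9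
        have e1 : ((q:ℝ)*s)^2 = (q:ℝ)^2*(D*R^2 - (k:ℝ)^2) := by rw [mul_pow, hs2]
        rw [e1] at hsq
        nlinarith [hiden, hsq, mul_pos hD0 (pow_pos hq' 2)]
      have h3 : |(n:ℝ) - (p:ℝ)/(q:ℝ) * m| < (m:ℝ) * (c/R) := by
        have heq : (n:ℝ) - (p:ℝ)/(q:ℝ)*m = (k:ℝ)/q := by
          rw [← hkr]; field_simp
        rw [heq, abs_div, abs_of_pos hq', div_lt_iff₀ hq']
        rw [div_lt_iff₀ (by positivity)] at hAm
        have h4 : (m:ℝ) * (c/R) * q = (m:ℝ)*q*c/R := by ring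
        rw [h4, lt_div_iff₀ hR0]
        linarith
      exact ⟨h1, h2, h3⟩
  -- conclude
  rw [latticeS, hset, Set.ncard_coe_finset, hF]
  rw [Finset.card_biUnion]
  · apply Finset.sum_congr rfl
    intro k _
    rw [Finset.card_image_of_injective _ (fun t₁ t₂ h => by
      simp only [Prod.mk.injEq] at h
      have h2 : q * t₁ = q * t₂ := by linarith [h.1]
      exact mul_left_cancel₀ hq0 h2), Int.card_Ioc]
  · intro k hk k' hk' hkk'
    rw [Function.onFun, Finset.disjoint_left]
    rintro ⟨m, n⟩ hmem hmem'
    simp only [Finset.mem_image, Finset.mem_Ioc] at hmem hmem'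
    obtain ⟨t, _, heq⟩ := hmem
    obtain ⟨t', _, heq'⟩ := hmem'
    apply hkk'
    simp only [Prod.mk.injEq] at heq heq'
    have e1 := heq
    have e2 := heq'
    have hk_val : k = q*n - p*m := by
      rw [← e1.1, ← e1.2]; linear_combination (-k) * hab
    have hk'_val : k' = q*n - p*m := by
      rw [← e2.1, ← e2.2]; linear_combination (-k') * hab
    rw [hk_val, hk'_val]


lemma term_bound (p q a₀ K : ℤ) (hq : 0 < q) (c R : ℝ) (hc : 0 < c)
    (hK : (q:ℝ)*c ≤ (K:ℝ)) (hR : (K:ℝ) + |(p:ℝ)| * (K:ℝ) + 1 ≤ R)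
    (k : ℤ) (hk1 : -K ≤ k) (hk2 : k ≤ K) :
    |((⌊bF p q a₀ R k⌋ - ⌊aF q a₀ c R k⌋).toNat : ℝ)
      - R * (1/(c*(q:ℝ)^2)) * max 0 (c*(q:ℝ)^2/Real.sqrt ((p:ℝ)^2+(q:ℝ)^2) - |(k:ℝ)|)|
    ≤ 1 + ((q:ℝ)+|(p:ℝ)|)*(K:ℝ)/((((p:ℝ)^2+(q:ℝ)^2))*(q:ℝ)) := by
  have hq' : (0:ℝ) < q := by exact_mod_cast hq
  have hq1 : (1:ℝ) ≤ q := by exact_mod_cast hq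
  have hK0 : (0:ℝ) < K := lt_of_lt_of_le (by positivity) hK
  have hK1 : (1:ℝ) ≤ K := by
    have : (0:ℤ) < K := by exact_mod_cast hK0
    exact_mod_cast this
  have hpabs : (0:ℝ) ≤ |(p:ℝ)| * K := by positivity
  have hR0 : (0:ℝ) < R := by linarith
  set D : ℝ := (p:ℝ)^2+(q:ℝ)^2 with hD
  have hD1 : (1:ℝ) ≤ D := by nlinarith
  have hD0 : (0:ℝ) < D := by linarith
  set sd : ℝ := Real.sqrt D with hsd
  have hsd0 : 0 < sd := Real.sqrt_pos.mpr hD0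
  have hsd2 : sd * sd = D := Real.mul_self_sqrt hD0.le
  have hkK : |(k:ℝ)| ≤ (K:ℝ) := by
    have u1 : (-(K:ℝ)) ≤ (k:ℝ) := by exact_mod_cast hk1
    have u2 : (k:ℝ) ≤ (K:ℝ) := by exact_mod_cast hk2
    rw [abs_le]; exact ⟨u1, u2⟩
  have hDRk : (0:ℝ) ≤ D*R^2 - (k:ℝ)^2 := by
    nlinarith [sq_abs (k:ℝ), abs_nonneg (k:ℝ)]
  set s : ℝ := Real.sqrt (D*R^2 - (k:ℝ)^2) with hs
  have hs0 : 0 ≤ s := Real.sqrt_nonneg _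
  have hs2 : s^2 = D*R^2 - (k:ℝ)^2 := Real.sq_sqrt hDRk
  -- |s - R * sd| ≤ |k|
  have hsdiff : |s - R*sd| ≤ |(k:ℝ)| := by
    have e0 : R*sd = Real.sqrt (D*R^2) := by
      rw [Real.sqrt_mul hD0.le, Real.sqrt_sq hR0.le, hsd]; ring
    have e1 : s ≤ R*sd := by
      rw [e0]; exact Real.sqrt_le_sqrt (by nlinarith [sq_abs (k:ℝ), abs_nonneg (k:ℝ)])
    have e2 : R*sd ≤ s + |(k:ℝ)| := by
      rw [e0]
      calc Real.sqrt (D*R^2) ≤ Real.sqrt ((s + |(k:ℝ)|)^2) := by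
            apply Real.sqrt_le_sqrt
            nlinarith [sq_abs (k:ℝ), abs_nonneg (k:ℝ), hs0]
        _ = s + |(k:ℝ)| := Real.sqrt_sq (by positivity)
    rw [abs_le]; constructor <;> linarith
  -- the target value w
  set w : ℝ := R*sd/D - R*|(k:ℝ)|/(c*(q:ℝ)^2) with hw
  have e3 : R/sd = R*sd/D := by
    rw [div_eq_div_iff hsd0.ne' hD0.ne', ← hsd2]; ring
  have hwmax : R * (1/(c*(q:ℝ)^2)) * max 0 (c*(q:ℝ)^2/sd - |(k:ℝ)|) = max 0 w := by
    have hpos : (0:ℝ) ≤ R * (1/(c*(q:ℝ)^2)) := by positivity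
    rw [mul_max_of_nonneg _ _ hpos, mul_zero]
    congr 1
    rw [hw, ← e3]
    field_simp
  -- b - a - w
  have hbF : bF p q a₀ R k = (((q:ℝ)*s - (p:ℝ)*k)/D + (a₀:ℝ)*k)/q := rfl
  have haF : aF q a₀ c R k = (|(k:ℝ)| * R / ((q:ℝ)*c) + (a₀:ℝ)*(k:ℝ)) / (q:ℝ) := rfl
  have hkey : bF p q a₀ R k - aF q a₀ c R k - w = ((q:ℝ)*(s - R*sd) - (p:ℝ)*k)/(D*q) := by
    rw [hbF, haF, hw]
    field_simp
    ring
  have hfloor : |((⌊bF p q a₀ R k⌋ : ℝ) - (⌊aF q a₀ c R k⌋:ℝ)) - (bF p q a₀ R k - aF q a₀ c R k)| ≤ 1 := by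
    have f1 := Int.floor_le (bF p q a₀ R k)
    have f2 := Int.sub_one_lt_floor (bF p q a₀ R k)
    have f3 := Int.floor_le (aF q a₀ c R k)
    have f4 := Int.sub_one_lt_floor (aF q a₀ c R k)
    rw [abs_le]; constructor <;> linarith
  have hnum : |(q:ℝ)*(s - R*sd) - (p:ℝ)*k| ≤ ((q:ℝ)+|(p:ℝ)|) * (K:ℝ) := by
    rw [sub_eq_add_neg]
    refine (abs_add_le _ _).trans ?_
    rw [abs_neg, abs_mul, abs_mul, abs_of_pos hq']
    nlinarith [hsdiff, hkK, abs_nonneg (p:ℝ), abs_nonneg (s - R*sd), abs_nonneg (k:ℝ)]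
  have hC : |bF p q a₀ R k - aF q a₀ c R k - w| ≤ ((q:ℝ)+|(p:ℝ)|) * (K:ℝ)/(D*(q:ℝ)) := by
    rw [hkey, abs_div, abs_of_pos (by positivity : (0:ℝ) < D*(q:ℝ))]
    exact (div_le_div_iff_of_pos_right (by positivity)).mpr hnum
  have htn : ((⌊bF p q a₀ R k⌋ - ⌊aF q a₀ c R k⌋).toNat : ℝ)
      = max ((⌊bF p q a₀ R k⌋:ℝ) - (⌊aF q a₀ c R k⌋:ℝ)) 0 := by
    have h := congrArg (Int.cast : ℤ → ℝ) (Int.toNat_eq_max (⌊bF p q a₀ R k⌋ - ⌊aF q a₀ c R k⌋))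
    push_cast at h
    simpa using h
  rw [htn, hwmax, max_comm 0 w]
  refine (abs_max_sub_max_le_abs _ _ _).trans ?_
  have split : ((⌊bF p q a₀ R k⌋:ℝ) - (⌊aF q a₀ c R k⌋:ℝ)) - w
      = (((⌊bF p q a₀ R k⌋:ℝ) - (⌊aF q a₀ c R k⌋:ℝ)) - (bF p q a₀ R k - aF q a₀ c R k))
        + ((bF p q a₀ R k - aF q a₀ c R k) - w) := by ring
  rw [split]
  refine (abs_add_le _ _).trans ?_
  linarith


/-- Fix `α = p/q ∈ ℚ` with `q > 0` and `gcd(p,q) = 1`, fix `c > 0`, and set `ε = c/R`.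
Then `S_α(ε,R) = γ R + O(1)`, where
`γ = c q²/(p²+q²) + (1/(c q²))·{c q²/√(p²+q²)}·(1 − {c q²/√(p²+q²)})`.
In particular, if `c < √(p²+q²)/q²`, then `γ = 1/√(p²+q²)`. -/
theorem rational_critical (p q : ℤ) (hq : 0 < q) (hpq : Int.gcd p q = 1)
    (c : ℝ) (hc : 0 < c) :
    ((fun R => (latticeS ((p : ℝ) / q) (c / R) R : ℝ) -
        (c * (q : ℝ) ^ 2 / ((p : ℝ) ^ 2 + (q : ℝ) ^ 2) +
          1 / (c * (q : ℝ) ^ 2) *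
            Int.fract (c * (q : ℝ) ^ 2 / Real.sqrt ((p : ℝ) ^ 2 + (q : ℝ) ^ 2)) *
            (1 - Int.fract (c * (q : ℝ) ^ 2 / Real.sqrt ((p : ℝ) ^ 2 + (q : ℝ) ^ 2)))) * R)
      =O[atTop] fun _ : ℝ => (1 : ℝ)) ∧
    (c < Real.sqrt ((p : ℝ) ^ 2 + (q : ℝ) ^ 2) / (q : ℝ) ^ 2 →
      c * (q : ℝ) ^ 2 / ((p : ℝ) ^ 2 + (q : ℝ) ^ 2) +
          1 / (c * (q : ℝ) ^ 2) *
            Int.fract (c * (q : ℝ) ^ 2 / Real.sqrt ((p : ℝ) ^ 2 + (q : ℝ) ^ 2)) *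
            (1 - Int.fract (c * (q : ℝ) ^ 2 / Real.sqrt ((p : ℝ) ^ 2 + (q : ℝ) ^ 2))) =
        1 / Real.sqrt ((p : ℝ) ^ 2 + (q : ℝ) ^ 2)) := by
  have hq' : (0:ℝ) < q := by exact_mod_cast hq
  have hq1 : (1:ℝ) ≤ q := by exact_mod_cast hq
  have hD0 : (0:ℝ) < (p:ℝ)^2 + (q:ℝ)^2 := by positivity
  set D : ℝ := (p:ℝ)^2+(q:ℝ)^2 with hD
  have hsd0 : 0 < Real.sqrt D := Real.sqrt_pos.mpr hD0
  have hsd2 : Real.sqrt D * Real.sqrt D = D := Real.mul_self_sqrt hD0.le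
  have hqsd : (q:ℝ) ≤ Real.sqrt D := by
    rw [show (q:ℝ) = Real.sqrt ((q:ℝ)^2) from (Real.sqrt_sq hq'.le).symm]
    apply Real.sqrt_le_sqrt; nlinarith [sq_nonneg (p:ℝ)]
  set x : ℝ := c*(q:ℝ)^2/Real.sqrt D with hx
  have hx0 : 0 < x := by positivity
  constructor
  · -- Big-O part
    obtain ⟨a₀, b₀, hab⟩ := Int.isCoprime_iff_gcd_eq_one.mpr hpq
    set K : ℤ := ⌈(q:ℝ)*c⌉ with hKdef
    have hK : (q:ℝ)*c ≤ (K:ℝ) := Int.le_ceil _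
    have hK0 : (0:ℝ) < K := lt_of_lt_of_le (by positivity) hK
    have hK1R : (1:ℝ) ≤ K := by
      have : (0:ℤ) < K := by exact_mod_cast hK0
      exact_mod_cast this
    have hxK : x ≤ (K:ℝ) := by
      have h1 : x ≤ (q:ℝ)*c := by
        rw [hx, div_le_iff₀ hsd0]
        nlinarith [mul_le_mul_of_nonneg_left hqsd (by positivity : (0:ℝ) ≤ c*(q:ℝ))]
      linarith
    rw [Asymptotics.isBigO_iff]
    refine ⟨(2*(K:ℝ)+1)*(1 + ((q:ℝ)+|(p:ℝ)|)*(K:ℝ)/(D*(q:ℝ))), ?_⟩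
    filter_upwards [eventually_ge_atTop ((K:ℝ) + |(p:ℝ)| * (K:ℝ) + 1)] with R hR
    have hcast : (latticeS ((p:ℝ)/(q:ℝ)) (c/R) R : ℝ) = ∑ k ∈ Finset.Icc (-K) K,
        ((⌊bF p q a₀ R k⌋ - ⌊aF q a₀ c R k⌋).toNat : ℝ) := by
      have := latticeS_eq p q a₀ b₀ K hq hab c R hc hK hR
      exact_mod_cast congrArg (Nat.cast : ℕ → ℝ) this
    have hγR : (c * (q:ℝ)^2 / D + 1/(c*(q:ℝ)^2) * Int.fract x * (1 - Int.fract x)) * R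
        = ∑ k ∈ Finset.Icc (-K) K, R * (1/(c*(q:ℝ)^2)) * max 0 (x - |(k:ℝ)|) := by
      rw [← Finset.mul_sum, max_sum_identity x hx0 K hxK]
      have hx2 : x^2 = (c*(q:ℝ)^2)^2/D := by
        rw [hx, div_pow]; congr 1
        rw [sq]; exact hsd2
      rw [hx2]
      field_simp
    rw [Real.norm_eq_abs, norm_one, mul_one]
    calc |(latticeS ((p:ℝ)/(q:ℝ)) (c/R) R : ℝ) -
          (c * (q:ℝ)^2 / D + 1/(c*(q:ℝ)^2) * Int.fract x * (1 - Int.fract x)) * R|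
        = |∑ k ∈ Finset.Icc (-K) K, (((⌊bF p q a₀ R k⌋ - ⌊aF q a₀ c R k⌋).toNat : ℝ)
            - R * (1/(c*(q:ℝ)^2)) * max 0 (x - |(k:ℝ)|))| := by
          rw [hcast, hγR, ← Finset.sum_sub_distrib]
      _ ≤ ∑ k ∈ Finset.Icc (-K) K, |(((⌊bF p q a₀ R k⌋ - ⌊aF q a₀ c R k⌋).toNat : ℝ)
            - R * (1/(c*(q:ℝ)^2)) * max 0 (x - |(k:ℝ)|))| := Finset.abs_sum_le_sum_abs _ _
      _ ≤ (Finset.Icc (-K) K).card • (1 + ((q:ℝ)+|(p:ℝ)|)*(K:ℝ)/(D*(q:ℝ))) := by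
          apply Finset.sum_le_card_nsmul
          intro k hk
          simp only [Finset.mem_Icc] at hk
          exact term_bound p q a₀ K hq c R hc hK hR k hk.1 hk.2
      _ ≤ (2*(K:ℝ)+1)*(1 + ((q:ℝ)+|(p:ℝ)|)*(K:ℝ)/(D*(q:ℝ))) := by
          rw [nsmul_eq_mul]
          apply mul_le_mul_of_nonneg_right
          · rw [Int.card_Icc]
            have h1 : (K + 1 - -K).toNat = (2*K+1).toNat := by congr 1; ring
            rw [h1]
            have h2 : ((2*K+1).toNat : ℝ) = 2*(K:ℝ)+1 := by
              have : ((2*K+1).toNat : ℤ) = 2*K+1 := Int.toNat_of_nonneg (by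
                have : (0:ℤ) < K := by exact_mod_cast hK0
                omega)
              exact_mod_cast this
            rw [h2]
          · have hDq : (0:ℝ) < D*(q:ℝ) := by positivity
            positivity
  · -- second part
    intro h
    have hx1 : x < 1 := by
      rw [hx, div_lt_one hsd0]
      calc c * (q:ℝ)^2 < (Real.sqrt D / (q:ℝ)^2) * (q:ℝ)^2 := by
            apply mul_lt_mul_of_pos_right h (by positivity)
        _ = Real.sqrt D := by field_simp
    have hfr : Int.fract x = x := Int.fract_eq_self.mpr ⟨hx0.le, hx1⟩
    rw [hfr, hx]
    field_simp
    rw [Real.sq_sqrt hD0.le]; ring
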